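/- arXiv:1508.01127 — 2 statements merged into one kernel-verified Lean document; each statement's English description precedes it below -/
import Mathlib

section
/- Diamond property for communication with replicated input: if T ≡ (νc)(c̄⟨z̃⟩ | !c(x̃).T₁ | c̄⟨ỹ⟩ | T₃), then the two steps consuming the two outputs on c with the replicated input commute, i.e., both T step T' and T step P' (reducing c̄⟨z̃⟩ and c̄⟨ỹ⟩ respectively) can be completed to a common process Q' ≡ (νc)(T₁[z̃/x̃] | T₁[ỹ/x̃] | !c(x̃).T₁ | T₃) with T' step Q' and P' step Q'. -/
/-- Asynchronous CCS with name passing: processes. -/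
inductive Proc (Name : Type) : Type
  | nil : Proc Name
  | par : Proc Name → Proc Name → Proc Name
  | res : List Name → Proc Name → Proc Name
  | repInput : Name → List Name → Proc Name → Proc Name
  | input : Name → List Name → Proc Name → Proc Name
  | output : Name → List Name → Proc Name
  | mtch : Name → Name → Proc Name → Proc Name
  | success : Proc Name

/-- A reduction semantics for asynchronous CCS with name passing: a (capture-avoiding)
substitution `subst P ys xs = P[ys/xs]`, a structural congruence `equiv`, and a
reduction relation `step` closed under the standard rules. -/
structure CCSSem (Name : Type) where
  subst : Proc Name → List Name → List Name → Proc Name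
  equiv : Proc Name → Proc Name → Prop
  step : Proc Name → Proc Name → Prop
  equiv_refl : ∀ P, equiv P P
  equiv_symm : ∀ {P Q}, equiv P Q → equiv Q P
  equiv_trans : ∀ {P Q R}, equiv P Q → equiv Q R → equiv P R
  par_nil : ∀ P, equiv (.par P .nil) P
  par_comm : ∀ P Q, equiv (.par P Q) (.par Q P)
  par_assoc : ∀ P Q R, equiv (.par P (.par Q R)) (.par (.par P Q) R)
  res_nil : ∀ cs, equiv (.res cs .nil) .nil
  mtch_eq : ∀ a P, equiv (.mtch a a P) P
  mtch_ne : ∀ a b P, a ≠ b → equiv (.mtch a b P) .nil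
  par_congr : ∀ {P P'} (Q), equiv P P' → equiv (.par P Q) (.par P' Q)
  res_congr : ∀ (cs) {P P'}, equiv P P' → equiv (.res cs P) (.res cs P')
  step_rep : ∀ c xs ys P,
    step (.par (.repInput c xs P) (.output c ys)) (.par (.repInput c xs P) (subst P ys xs))
  step_com : ∀ c xs ys Q, step (.par (.output c ys) (.input c xs Q)) (subst Q ys xs)
  step_par : ∀ {P P'} (Q), step P P' → step (.par P Q) (.par P' Q)
  step_res : ∀ (cs) {P P'}, step P P' → step (.res cs P) (.res cs P')
  step_cong : ∀ {P P' Q Q'}, equiv P P' → step P' Q' → equiv Q' Q → step P Q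

/-! Replicated input is not consumed by the replication rule, so after either output on `c` has
fired the other one can still meet `!c(x̃).T₁`; each step is the replication rule under
`(νc)(· | T₃)`, up to reordering the parallel components. -/

namespace CCSSem

variable {Name : Type} (C : CCSSem Name)

lemma step_of_equiv_of_step {P P' Q : Proc Name} (h : C.equiv P P') (hs : C.step P' Q) :
    C.step P Q :=
  C.step_cong h hs (C.equiv_refl Q)

lemma par_congr_right {Q Q' : Proc Name} (P : Proc Name) (h : C.equiv Q Q') :
    C.equiv (.par P Q) (.par P Q') :=
  C.equiv_trans (C.par_comm P Q) (C.equiv_trans (C.par_congr P h) (C.par_comm Q' P))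

lemma par_right_comm (P Q R : Proc Name) :
    C.equiv (.par (.par P Q) R) (.par (.par P R) Q) :=
  C.equiv_trans (C.equiv_symm (C.par_assoc P Q R))
    (C.equiv_trans (C.par_congr_right P (C.par_comm Q R)) (C.par_assoc P R Q))

lemma step_par_right {Q Q' : Proc Name} (P : Proc Name) (h : C.step Q Q') :
    C.step (.par P Q) (.par P Q') :=
  C.step_cong (C.par_comm P Q) (C.step_par P h) (C.par_comm Q' P)

lemma step_output_repInput (c : Name) (xs ws : List Name) (P : Proc Name) :
    C.step (.par (.output c ws) (.repInput c xs P))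
      (.par (C.subst P ws xs) (.repInput c xs P)) :=
  C.step_cong (C.par_comm _ _) (C.step_rep c xs ws P) (C.par_comm _ _)

lemma step_par_repInput_output (c : Name) (xs ws : List Name) (P X : Proc Name) :
    C.step (.par (.par X (.repInput c xs P)) (.output c ws))
      (.par (.par X (C.subst P ws xs)) (.repInput c xs P)) :=
  C.step_cong (C.equiv_symm (C.par_assoc X _ _))
    (C.step_par_right X (C.step_rep c xs ws P))
    (C.equiv_trans (C.par_assoc X _ _) (C.par_right_comm X _ _))

lemma step_output_par_repInput (c : Name) (xs ws : List Name) (P Y : Proc Name) :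
    C.step (.par (.par (.output c ws) Y) (.repInput c xs P))
      (.par (.par (C.subst P ws xs) Y) (.repInput c xs P)) :=
  C.step_cong (C.par_right_comm _ Y _)
    (C.step_par Y (C.step_output_repInput c xs ws P))
    (C.par_right_comm _ _ Y)

end CCSSem

/-- Diamond property for communication with replicated input: if
`T ≡ (νc)(c̄⟨z̃⟩ | !c(x̃).T₁ | c̄⟨ỹ⟩ | T₃)`, then the two steps consuming the two
outputs on `c` with the replicated input commute: both `T step T'` and `T step P'`
(reducing `c̄⟨z̃⟩` and `c̄⟨ỹ⟩` respectively) can be completed to a common process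
`Q' ≡ (νc)(T₁[z̃/x̃] | T₁[ỹ/x̃] | !c(x̃).T₁ | T₃)` with `T' step Q'` and `P' step Q'`. -/
theorem diamond_replicated_input {Name : Type} (C : CCSSem Name) (c : Name)
    (zs ys xs : List Name) (T T₁ T₃ : Proc Name)
    (hT : C.equiv T (.res [c] (.par (.par (.par (.output c zs) (.repInput c xs T₁))
      (.output c ys)) T₃))) :
    ∃ T' P' Q',
      C.step T T' ∧ C.step T P' ∧
      C.equiv T' (.res [c] (.par (.par (.par (C.subst T₁ zs xs) (.repInput c xs T₁))
        (.output c ys)) T₃)) ∧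
      C.equiv P' (.res [c] (.par (.par (.par (.output c zs) (C.subst T₁ ys xs))
        (.repInput c xs T₁)) T₃)) ∧
      C.step T' Q' ∧ C.step P' Q' ∧
      C.equiv Q' (.res [c] (.par (.par (.par (C.subst T₁ zs xs) (C.subst T₁ ys xs))
        (.repInput c xs T₁)) T₃)) := by
  refine ⟨_, _, _, ?_, ?_, C.equiv_refl _, C.equiv_refl _, ?_, ?_, C.equiv_refl _⟩
  · exact C.step_of_equiv_of_step hT <| C.step_res [c] <| C.step_par T₃ <|
      C.step_par (.output c ys) (C.step_output_repInput c xs zs T₁)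
  · exact C.step_of_equiv_of_step hT <| C.step_res [c] <| C.step_par T₃ <|
      C.step_par_repInput_output c xs ys T₁ (.output c zs)
  · exact C.step_res [c] <| C.step_par T₃ <|
      C.step_par_repInput_output c xs ys T₁ (C.subst T₁ zs xs)
  · exact C.step_res [c] <| C.step_par T₃ <|
      C.step_output_par_repInput c xs zs T₁ (C.subst T₁ ys xs)
end

section
/- From operational correspondence to bisimilarity: if an encoding enc satisfies (Completeness) S steps* S' implies ∃T, enc(S) steps* T ∧ enc(S') ≈ T, and (Soundness) enc(S) steps* T implies ∃S', S steps* S' ∧ enc(S') ≈ T, where ≈ is a success-sensitive, barb-respecting weak reduction bisimilarity on the target, and enc is success sensitive and barb sensitive, then every source term S is bisimilar to its translation: S ≈ enc(S) on the disjoint union of the source and target reduction systems. -/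
/-- Reflexive-transitive closure of the reduction relation. -/
def Steps {P : Type*} (step : P → P → Prop) : P → P → Prop :=
  Relation.ReflTransGen step

/-- A process reaches success if it reduces to a process with unguarded success. -/
def ReachSuccess {P : Type*} (step : P → P → Prop) (hasSuccess : P → Prop) (p : P) : Prop :=
  ∃ p', Steps step p p' ∧ hasSuccess p'

/-- Success-sensitive, barb-respecting, weak reduction bisimulation. -/
def IsBisimulation {P Name : Type*} (step : P → P → Prop) (hasSuccess : P → Prop)
    (reachBarb : P → Name → Prop) (R : P → P → Prop) : Prop :=
  ∀ p q, R p q →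
    (∀ p', step p p' → ∃ q', Steps step q q' ∧ R p' q') ∧
    (∀ q', step q q' → ∃ p', Steps step p p' ∧ R p' q') ∧
    (ReachSuccess step hasSuccess p ↔ ReachSuccess step hasSuccess q) ∧
    (∀ a, reachBarb p a ↔ reachBarb q a)

/-- Bisimilarity: two processes are bisimilar if some bisimulation relates them. -/
def Bisimilar {P Name : Type*} (step : P → P → Prop) (hasSuccess : P → Prop)
    (reachBarb : P → Name → Prop) (p q : P) : Prop :=
  ∃ R, IsBisimulation step hasSuccess reachBarb R ∧ R p q

/-- The reduction relation on the disjoint union of a source and a target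
reduction system (no cross steps). -/
def SumStep {S T : Type*} (stepS : S → S → Prop) (stepT : T → T → Prop) :
    S ⊕ T → S ⊕ T → Prop
  | Sum.inl a, Sum.inl b => stepS a b
  | Sum.inr a, Sum.inr b => stepT a b
  | _, _ => False

/-- Success on the disjoint union. -/
def SumSuccess {S T : Type*} (succS : S → Prop) (succT : T → Prop) : S ⊕ T → Prop
  | Sum.inl a => succS a
  | Sum.inr a => succT a

/-- Barbs on the disjoint union: source barbs on source processes and translated
barbs on target processes. -/
def SumBarb {S T Name : Type*} (barbS : S → Name → Prop) (tbarbT : T → Name → Prop) :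
    S ⊕ T → Name → Prop
  | Sum.inl a => barbS a
  | Sum.inr a => tbarbT a

/-- Barb reachability derived from an immediate barb predicate. -/
def ReachBarbOf {P Name : Type*} (step : P → P → Prop) (barb : P → Name → Prop) :
    P → Name → Prop :=
  fun p a => ∃ p', Steps step p p' ∧ barb p' a

/-!
Relate each source term `s` to every target term `t` with `enc s ≈ t`. A source step is
answered through completeness and then transported along `enc s ≈ t`; a target step of `t`
is first simulated from `enc s` and then pulled back to the source by soundness. In both
cases the residuals are related because `≈` is an equivalence, and success and barbs agree
because `enc` preserves them and `≈` respects them.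
-/

namespace IsBisimulation

variable {P Name : Type*} {step : P → P → Prop} {hasSuccess : P → Prop}
  {reachBarb : P → Name → Prop} {R R' : P → P → Prop}

theorem eq : IsBisimulation step hasSuccess reachBarb Eq := by
  rintro p _ rfl
  exact ⟨fun p' h => ⟨p', .single h, rfl⟩, fun p' h => ⟨p', .single h, rfl⟩,
    Iff.rfl, fun _ => Iff.rfl⟩

theorem flip (hR : IsBisimulation step hasSuccess reachBarb R) :
    IsBisimulation step hasSuccess reachBarb (flip R) := by
  intro p q hqp
  obtain ⟨hfwd, hbwd, hsucc, hbarb⟩ := hR q p hqp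
  exact ⟨hbwd, hfwd, hsucc.symm, fun a => (hbarb a).symm⟩

theorem exists_steps (hR : IsBisimulation step hasSuccess reachBarb R) {p p' q : P}
    (hs : Steps step p p') (hpq : R p q) : ∃ q', Steps step q q' ∧ R p' q' := by
  induction hs with
  | refl => exact ⟨q, .refl, hpq⟩
  | tail _ hstep ih =>
    obtain ⟨q₁, hq₁, hR₁⟩ := ih
    obtain ⟨q₂, hq₂, hR₂⟩ := (hR _ _ hR₁).1 _ hstep
    exact ⟨q₂, hq₁.trans hq₂, hR₂⟩

theorem comp (hR : IsBisimulation step hasSuccess reachBarb R)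
    (hR' : IsBisimulation step hasSuccess reachBarb R') :
    IsBisimulation step hasSuccess reachBarb (Relation.Comp R R') := by
  rintro p r ⟨q, hpq, hqr⟩
  obtain ⟨hfwd, -, hsucc, hbarb⟩ := hR p q hpq
  obtain ⟨-, hbwd', hsucc', hbarb'⟩ := hR' q r hqr
  refine ⟨?_, ?_, hsucc.trans hsucc', fun a => (hbarb a).trans (hbarb' a)⟩
  · intro p' hp'
    obtain ⟨q', hq', hpq'⟩ := hfwd p' hp'
    obtain ⟨r', hr', hqr'⟩ := hR'.exists_steps hq' hqr
    exact ⟨r', hr', q', hpq', hqr'⟩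
  · intro r' hr'
    obtain ⟨q', hq', hqr'⟩ := hbwd' r' hr'
    obtain ⟨p', hp', hpq'⟩ := hR.flip.exists_steps hq' hpq
    exact ⟨p', hp', q', hpq', hqr'⟩

end IsBisimulation

namespace Bisimilar

variable {P Name : Type*} {step : P → P → Prop} {hasSuccess : P → Prop}
  {reachBarb : P → Name → Prop} {p q r : P}

@[refl]
theorem refl (p : P) : Bisimilar step hasSuccess reachBarb p p :=
  ⟨Eq, .eq, rfl⟩

@[symm]
theorem symm : Bisimilar step hasSuccess reachBarb p q → Bisimilar step hasSuccess reachBarb q p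
  | ⟨_, hR, hpq⟩ => ⟨_, hR.flip, hpq⟩

@[trans]
theorem trans :
    Bisimilar step hasSuccess reachBarb p q → Bisimilar step hasSuccess reachBarb q r →
      Bisimilar step hasSuccess reachBarb p r
  | ⟨_, hR, hpq⟩, ⟨_, hR', hqr⟩ => ⟨_, hR.comp hR', q, hpq, hqr⟩

theorem exists_steps {p' : P} (h : Bisimilar step hasSuccess reachBarb p q)
    (hs : Steps step p p') :
    ∃ q', Steps step q q' ∧ Bisimilar step hasSuccess reachBarb p' q' :=
  let ⟨R, hR, hpq⟩ := h
  let ⟨q', hq', hR'⟩ := hR.exists_steps hs hpq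
  ⟨q', hq', R, hR, hR'⟩

theorem reachSuccess_iff (h : Bisimilar step hasSuccess reachBarb p q) :
    ReachSuccess step hasSuccess p ↔ ReachSuccess step hasSuccess q :=
  let ⟨_, hR, hpq⟩ := h
  (hR p q hpq).2.2.1

theorem reachBarb_iff (h : Bisimilar step hasSuccess reachBarb p q) (a : Name) :
    reachBarb p a ↔ reachBarb q a :=
  let ⟨_, hR, hpq⟩ := h
  (hR p q hpq).2.2.2 a

end Bisimilar

section SumStep

variable {S T : Type*} {stepS : S → S → Prop} {stepT : T → T → Prop}

theorem steps_sumStep_inl_iff {s : S} {x : S ⊕ T} :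
    Steps (SumStep stepS stepT) (.inl s) x ↔ ∃ s', Steps stepS s s' ∧ x = .inl s' := by
  refine ⟨fun h => ?_, ?_⟩
  · induction h with
    | refl => exact ⟨s, .refl, rfl⟩
    | @tail y z _ hstep ih =>
      obtain ⟨s', hs', rfl⟩ := ih
      cases z with
      | inl s'' => exact ⟨s'', hs'.tail hstep, rfl⟩
      | inr _ => exact hstep.elim
  · rintro ⟨s', hs', rfl⟩
    exact Relation.ReflTransGen.lift (p := SumStep stepS stepT) Sum.inl
      (fun _ _ h => h) _ _ hs'

theorem steps_sumStep_inr_iff {t : T} {x : S ⊕ T} :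
    Steps (SumStep stepS stepT) (.inr t) x ↔ ∃ t', Steps stepT t t' ∧ x = .inr t' := by
  refine ⟨fun h => ?_, ?_⟩
  · induction h with
    | refl => exact ⟨t, .refl, rfl⟩
    | @tail y z _ hstep ih =>
      obtain ⟨t', ht', rfl⟩ := ih
      cases z with
      | inl _ => exact hstep.elim
      | inr t'' => exact ⟨t'', ht'.tail hstep, rfl⟩
  · rintro ⟨t', ht', rfl⟩
    exact Relation.ReflTransGen.lift (p := SumStep stepS stepT) Sum.inr
      (fun _ _ h => h) _ _ ht'

-- Stated for an arbitrary predicate so that it covers both success and each barb.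
theorem reachSuccess_sumStep_inl (Q : S ⊕ T → Prop) (s : S) :
    ReachSuccess (SumStep stepS stepT) Q (.inl s) ↔ ReachSuccess stepS (Q ∘ .inl) s := by
  simp only [ReachSuccess, steps_sumStep_inl_iff]
  constructor
  · rintro ⟨_, ⟨s', hs', rfl⟩, hQ⟩
    exact ⟨s', hs', hQ⟩
  · rintro ⟨s', hs', hQ⟩
    exact ⟨_, ⟨s', hs', rfl⟩, hQ⟩

theorem reachSuccess_sumStep_inr (Q : S ⊕ T → Prop) (t : T) :
    ReachSuccess (SumStep stepS stepT) Q (.inr t) ↔ ReachSuccess stepT (Q ∘ .inr) t := by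
  simp only [ReachSuccess, steps_sumStep_inr_iff]
  constructor
  · rintro ⟨_, ⟨t', ht', rfl⟩, hQ⟩
    exact ⟨t', ht', hQ⟩
  · rintro ⟨t', ht', hQ⟩
    exact ⟨_, ⟨t', ht', rfl⟩, hQ⟩

end SumStep

theorem isBisimulation_sumStep_of_correspondence
    {Src Tgt Name : Type*}
    {stepS : Src → Src → Prop} {succS : Src → Prop} {barbS : Src → Name → Prop}
    {stepT : Tgt → Tgt → Prop} {succT : Tgt → Prop} {tbarbT : Tgt → Name → Prop}
    {enc : Src → Tgt}
    (hcomplete : ∀ s s', Steps stepS s s' →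
      ∃ t, Steps stepT (enc s) t ∧
        Bisimilar stepT succT (ReachBarbOf stepT tbarbT) (enc s') t)
    (hsound : ∀ s t, Steps stepT (enc s) t →
      ∃ s', Steps stepS s s' ∧
        Bisimilar stepT succT (ReachBarbOf stepT tbarbT) (enc s') t)
    (hsucc : ∀ s, ReachSuccess stepS succS s ↔ ReachSuccess stepT succT (enc s))
    (hbarb : ∀ s a, ReachBarbOf stepS barbS s a ↔ ReachBarbOf stepT tbarbT (enc s) a) :
    IsBisimulation (SumStep stepS stepT) (SumSuccess succS succT)
      (ReachBarbOf (SumStep stepS stepT) (SumBarb barbS tbarbT))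
      (fun x y => ∃ s t, x = .inl s ∧ y = .inr t ∧
        Bisimilar stepT succT (ReachBarbOf stepT tbarbT) (enc s) t) := by
  rintro _ _ ⟨s, t, rfl, rfl, hst⟩
  refine ⟨?_, ?_, ?_, fun a => ?_⟩
  · rintro (s' | _) hstep
    · obtain ⟨t₀, ht₀, hs't₀⟩ := hcomplete s s' (.single hstep)
      obtain ⟨t', ht', ht₀t'⟩ := hst.exists_steps ht₀
      exact ⟨_, steps_sumStep_inr_iff.2 ⟨t', ht', rfl⟩, s', t', rfl, rfl,
        hs't₀.trans ht₀t'⟩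
    · exact hstep.elim
  · rintro (_ | t') hstep
    · exact hstep.elim
    · obtain ⟨t₀, ht₀, ht₀t'⟩ := hst.symm.exists_steps (.single hstep)
      obtain ⟨s', hs', hs't₀⟩ := hsound s t₀ ht₀
      exact ⟨_, steps_sumStep_inl_iff.2 ⟨s', hs', rfl⟩, s', t', rfl, rfl,
        hs't₀.trans ht₀t'.symm⟩
  · exact (reachSuccess_sumStep_inl _ s).trans <| (hsucc s).trans <|
      hst.reachSuccess_iff.trans (reachSuccess_sumStep_inr (SumSuccess succS succT) t).symm
  · exact (reachSuccess_sumStep_inl _ s).trans <| (hbarb s a).trans <|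
      (hst.reachBarb_iff a).trans
        (reachSuccess_sumStep_inr (SumBarb barbS tbarbT · a) t).symm

/-- From operational correspondence to bisimilarity: if an encoding `enc` is
complete and sound w.r.t. a success-sensitive, barb-respecting weak reduction
bisimilarity ≈ on the target, and `enc` is success sensitive and barb sensitive,
then every source term is bisimilar to its translation on the disjoint union of
the source and target reduction systems. -/
theorem operational_correspondence_bisimilarity
    {Src Tgt Name : Type*}
    (stepS : Src → Src → Prop) (succS : Src → Prop) (barbS : Src → Name → Prop)
    (stepT : Tgt → Tgt → Prop) (succT : Tgt → Prop) (tbarbT : Tgt → Name → Prop)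
    (enc : Src → Tgt)
    -- (Completeness)
    (hcomplete : ∀ s s', Steps stepS s s' →
      ∃ t, Steps stepT (enc s) t ∧
        Bisimilar stepT succT (ReachBarbOf stepT tbarbT) (enc s') t)
    -- (Soundness)
    (hsound : ∀ s t, Steps stepT (enc s) t →
      ∃ s', Steps stepS s s' ∧
        Bisimilar stepT succT (ReachBarbOf stepT tbarbT) (enc s') t)
    -- success sensitiveness of enc
    (hsucc : ∀ s, ReachSuccess stepS succS s ↔ ReachSuccess stepT succT (enc s))
    -- barb sensitiveness of enc
    (hbarb : ∀ s a, ReachBarbOf stepS barbS s a ↔ ReachBarbOf stepT tbarbT (enc s) a) :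
    ∀ s : Src,
      Bisimilar (SumStep stepS stepT) (SumSuccess succS succT)
        (ReachBarbOf (SumStep stepS stepT) (SumBarb barbS tbarbT))
        (Sum.inl s) (Sum.inr (enc s)) := by
  intro s
  exact ⟨_, isBisimulation_sumStep_of_correspondence hcomplete hsound hsucc hbarb,
    s, enc s, rfl, rfl, .refl _⟩
end
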